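/- arXiv:1604.05090 — 2 statements merged into one kernel-verified Lean document; each statement's English description precedes it below -/
import Mathlib

section
/- Let P be a comparison matrix for N = 2^n players with 0 < P_ij < 1 for all i ≠ j, let σ be a draw and i* a player. For each pair k < l let α_kl be the slope of the affine function t ↦ wp(i*, P[kl←t], σ), where P[kl←t] agrees with P except P_kl = t, P_lk = 1 − t. Then lim_{ε → 0+} ( wp(i*,P,σ) − wp_ε(i*,P,σ) ) / ε = Σ_{k < l} |α_kl|. -/
/-- A perfect (balanced) binary tree of depth `n` with leaves labelled by `α`. -/
inductive BT (α : Type) : ℕ → Type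
  | leaf : α → BT α 0
  | node {n : ℕ} : BT α n → BT α n → BT α (n + 1)

namespace BT

/-- The list of leaf labels, from left to right. -/
def leaves {α : Type} : ∀ {n : ℕ}, BT α n → List α
  | _, .leaf a => [a]
  | _, .node L R => L.leaves ++ R.leaves

/-- Relabel the leaves of a tree. -/
def map {α β : Type} (f : α → β) : ∀ {n : ℕ}, BT α n → BT β n
  | _, .leaf a => .leaf (f a)
  | _, .node L R => .node (L.map f) (R.map f)

end BT

/-- Two trees represent the same draw iff one can be obtained from the other by
swapping the two children subtrees at internal nodes. -/
def BTequiv {α : Type} : ∀ {n : ℕ}, BT α n → BT α n → Prop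
  | 0, .leaf a, .leaf b => a = b
  | _ + 1, .node L R, .node L' R' =>
      (BTequiv L L' ∧ BTequiv R R') ∨ (BTequiv L R' ∧ BTequiv R L')

/-- A draw: each of the `N` players occurs exactly once among the leaves. -/
def IsDraw {N n : ℕ} (t : BT (Fin N) n) : Prop :=
  ∀ i : Fin N, t.leaves.count i = 1

/-- The winning distribution of a knockout tournament: `wd P t i` is the probability
that player `i` wins the (sub)tournament with draw `t` and comparison matrix `P`. -/
noncomputable def wd {N : ℕ} (P : Fin N → Fin N → ℝ) :
    ∀ {n : ℕ}, BT (Fin N) n → Fin N → ℝ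
  | _, .leaf j => fun i => if i = j then 1 else 0
  | _, .node L R => fun i =>
      wd P L i * (∑ j, wd P R j * P i j) + wd P R i * (∑ j, wd P L j * P i j)

/-- `P` is a comparison matrix. -/
def IsCompMatrix {N : ℕ} (P : Fin N → Fin N → ℝ) : Prop :=
  ∀ i j : Fin N, i ≠ j → 0 ≤ P i j ∧ P i j ≤ 1 ∧ P i j + P j i = 1

/-- `P` is deterministic: every off-diagonal entry is 0 or 1. -/
def IsDet {N : ℕ} (P : Fin N → Fin N → ℝ) : Prop :=
  ∀ i j : Fin N, i ≠ j → P i j = 0 ∨ P i j = 1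

/-- The set `𝒫(P,ε)` of ε-perturbations of `P`. -/
def perturbs {N : ℕ} (P : Fin N → Fin N → ℝ) (ε : ℝ) : Set (Fin N → Fin N → ℝ) :=
  {P' | IsCompMatrix P' ∧ ∀ i j : Fin N, i ≠ j → |P' i j - P i j| ≤ ε}

/-- The ε-guaranteed winning probability `wp_ε(i,P,σ)`. -/
noncomputable def wpe {N n : ℕ} (i : Fin N) (P : Fin N → Fin N → ℝ) (ε : ℝ)
    (t : BT (Fin N) n) : ℝ :=
  sInf ((fun P' => wd P' t i) '' perturbs P ε)

/-- The comparison matrix of the hard `n`-round tournament `H_n` (players 0-indexed):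
for `i < j`, player `i` beats player `j` iff `i = j - 2 ^ v` where `2 ^ v` is the largest
power of 2 dividing `j` (in 0-indexed numbering). -/
noncomputable def hardP (n : ℕ) : Fin (2 ^ n) → Fin (2 ^ n) → ℝ := fun i j =>
  if i = j then 0
  else if (i : ℕ) < (j : ℕ) then
    (if (i : ℕ) + 2 ^ padicValNat 2 (j : ℕ) = (j : ℕ) then 1 else 0)
  else
    (if (j : ℕ) + 2 ^ padicValNat 2 (i : ℕ) = (i : ℕ) then 0 else 1)

/-- The tree of depth `n` whose leaves are `s, s+1, …, s + 2^n - 1` from left to right. -/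
def ordTree : (n : ℕ) → ℕ → BT ℕ n
  | 0, s => .leaf s
  | n + 1, s => .node (ordTree n s) (ordTree n (s + 2 ^ n))

/-- The identity draw, placing players `0, 1, …, 2^n - 1` on the leaves in order. -/
def idDraw (n : ℕ) : BT (Fin (2 ^ n)) n :=
  (ordTree n 0).map (fun k => ⟨k % 2 ^ n, Nat.mod_lt _ (by positivity)⟩)

/-- `f_p(x,y) = p(x+y) + (1-2p)xy`. -/
def fp (p x y : ℝ) : ℝ := p * (x + y) + (1 - 2 * p) * x * y

/-- `B_p` on trees with real leaf labels. -/
noncomputable def Bp (p : ℝ) : ∀ {n : ℕ}, BT ℝ n → ℝ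
  | _, .leaf x => x
  | _, .node L R => fp p (Bp p L) (Bp p R)

/-- Group a list into consecutive pairs. -/
def pairList {α : Type} : List α → List (α × α)
  | a :: b :: rest => (a, b) :: pairList rest
  | _ => []

/-- The first-round matches of a draw: the consecutive sibling pairs of leaves. -/
def firstPairs {α : Type} {n : ℕ} (t : BT α n) : List (α × α) := pairList t.leaves

/-- A draw is mixed (w.r.t. the set `B` of big players) if every first-round match
pairs a big player with a small player. -/
def MixedDraw {N n : ℕ} (B : Finset (Fin N)) (t : BT (Fin N) n) : Prop :=
  ∀ q ∈ firstPairs t, ((q.1 ∈ B) ↔ q.2 ∉ B)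

/-- Number of leaves labelled `1`. -/
noncomputable def ones {n : ℕ} (t : BT ℝ n) : ℕ := t.leaves.count 1

/-- All leaf labels are `0` or `1`. -/
def ZeroOne {n : ℕ} (t : BT ℝ n) : Prop := ∀ x ∈ t.leaves, x = 0 ∨ x = 1

/-- `P[kl←t]`: the matrix agreeing with `P` except `P k l = t` and `P l k = 1 - t`. -/
def updPair {N : ℕ} (P : Fin N → Fin N → ℝ) (k l : Fin N) (t : ℝ) :
    Fin N → Fin N → ℝ :=
  fun i j => if i = k ∧ j = l then t else if i = l ∧ j = k then 1 - t else P i j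

/-- Perturb a deterministic matrix: for each pair `(w, l) ∈ S` (winner first),
set `P w l = 1 - ε` and `P l w = ε`; other entries unchanged. -/
def detPerturb {N : ℕ} (P : Fin N → Fin N → ℝ) (S : Finset (Fin N × Fin N)) (ε : ℝ) :
    Fin N → Fin N → ℝ :=
  fun i j => if (i, j) ∈ S then 1 - ε else if (j, i) ∈ S then ε else P i j

/-- Swap the result of the single match between `a` and `b`. -/
def swapPair {N : ℕ} (P : Fin N → Fin N → ℝ) (a b : Fin N) : Fin N → Fin N → ℝ :=
  fun i j => if i = a ∧ j = b then P b a else if i = b ∧ j = a then P a b else P i j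

/-- The pair `(a,b)` (with `a` the winner) is crucial for `i` in `C(P,σ)`. -/
def Crucial {N n : ℕ} (P : Fin N → Fin N → ℝ) (σ : BT (Fin N) n) (i : Fin N)
    (a b : Fin N) : Prop :=
  a ≠ b ∧ P a b = 1 ∧ wd (swapPair P a b) σ i = 0

/-!
Parametrise a comparison matrix by its strict upper triangle `x`. On a draw the winning
probability ignores the diagonal, so for `ε` below every entry of `P` the set `𝒫(P,ε)` is
exactly the sup-norm ball of radius `ε` around the upper triangle of `P`. On that ball the
winning probability `G` is `G x + G' (y - x) + o(ε)`, the partial derivatives of `G` are the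
slopes `α_kl`, and the linear part attains its minimum `-ε Σ |α_kl|` at a corner of the ball.
-/

open Filter Topology Metric

section Pi

variable {ι : Type*} [Fintype ι] [DecidableEq ι]

theorem ContinuousLinearMap.apply_eq_sum_mul_single (L : (ι → ℝ) →L[ℝ] ℝ) (v : ι → ℝ) :
    L v = ∑ i, v i * L (Pi.single i 1) := by
  conv_lhs => rw [← Finset.univ_sum_single v, map_sum]
  refine Finset.sum_congr rfl fun i _ => ?_
  rw [← smul_eq_mul, ← map_smul, ← Pi.single_smul, smul_eq_mul, mul_one]

theorem ContinuousLinearMap.isLeast_image_closedBall_zero (L : (ι → ℝ) →L[ℝ] ℝ) {ε : ℝ}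
    (hε : 0 ≤ ε) :
    IsLeast (L '' closedBall 0 ε) (-(ε * ∑ i, |L (Pi.single i 1)|)) := by
  refine ⟨⟨fun i => -(ε * SignType.sign (L (Pi.single i 1))), ?_, ?_⟩, ?_⟩
  · rw [mem_closedBall_zero_iff, pi_norm_le_iff_of_nonneg hε]
    intro i
    rw [norm_neg, norm_mul, Real.norm_of_nonneg hε]
    refine mul_le_of_le_one_right hε ?_
    cases SignType.sign (L (Pi.single i 1)) <;> simp
  · rw [L.apply_eq_sum_mul_single, Finset.mul_sum, ← Finset.sum_neg_distrib]
    refine Finset.sum_congr rfl fun i _ => ?_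
    rw [neg_mul, mul_assoc, sign_mul_self]
  · rintro _ ⟨v, hv, rfl⟩
    rw [mem_closedBall_zero_iff, pi_norm_le_iff_of_nonneg hε] at hv
    rw [L.apply_eq_sum_mul_single, Finset.mul_sum, ← Finset.sum_neg_distrib]
    refine Finset.sum_le_sum fun i _ => ?_
    have hvi : |v i| ≤ ε := hv i
    calc -(ε * |L (Pi.single i 1)|) ≤ -|v i * L (Pi.single i 1)| := by
          rw [abs_mul]; gcongr
      _ ≤ v i * L (Pi.single i 1) := neg_abs_le _

theorem HasFDerivAt.tendsto_sub_sInf_image_closedBall_div {G : (ι → ℝ) → ℝ}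
    {G' : (ι → ℝ) →L[ℝ] ℝ} {x : ι → ℝ} (hG : HasFDerivAt G G' x) :
    Tendsto (fun ε => (G x - sInf (G '' closedBall x ε)) / ε) (𝓝[>] 0)
      (𝓝 (∑ i, |G' (Pi.single i 1)|)) := by
  set S := ∑ i, |G' (Pi.single i 1)|
  rw [Metric.tendsto_nhdsWithin_nhds]
  intro c hc
  obtain ⟨δ, hδ, hrem⟩ := Metric.eventually_nhds_iff.1 (hG.isLittleO.def (half_pos hc))
  refine ⟨δ, hδ, fun ε (hε : 0 < ε) hεδ => ?_⟩
  rw [Real.dist_0_eq_abs, _root_.abs_of_pos hε] at hεδ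
  have hclose : ∀ y ∈ closedBall x ε, |G y - (G x + G' (y - x))| ≤ c / 2 * ε := fun y hy => by
    have : ‖y - x‖ ≤ ε := mem_closedBall_iff_norm.1 hy
    calc |G y - (G x + G' (y - x))| ≤ c / 2 * ‖y - x‖ := by
          rw [← sub_sub]; exact hrem (lt_of_le_of_lt hy hεδ)
      _ ≤ c / 2 * ε := by gcongr
  obtain ⟨⟨v, hv, hLv⟩, hlow⟩ := G'.isLeast_image_closedBall_zero hε.le
  have hball : ∀ v ∈ closedBall (0 : ι → ℝ) ε, x + v ∈ closedBall x ε := fun v hv => by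
    rwa [mem_closedBall, dist_eq_norm, add_sub_cancel_left, ← mem_closedBall_zero_iff]
  have hlower : ∀ y ∈ closedBall x ε, G x - ε * S - c / 2 * ε ≤ G y := fun y hy => by
    have h1 := hlow ⟨y - x, by rwa [mem_closedBall_zero_iff, ← dist_eq_norm], rfl⟩
    have h2 := (abs_le.1 (hclose y hy)).1
    linarith
  have hupper : G (x + v) ≤ G x - ε * S + c / 2 * ε := by
    have h := (abs_le.1 (hclose (x + v) (hball v hv))).2
    rw [add_sub_cancel_left, hLv] at h
    linarith
  have hlb : G x - ε * S - c / 2 * ε ∈ lowerBounds (G '' closedBall x ε) := by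
    rintro _ ⟨y, hy, rfl⟩; exact hlower y hy
  have hinf_ge : G x - ε * S - c / 2 * ε ≤ sInf (G '' closedBall x ε) :=
    le_csInf ⟨G x, x, mem_closedBall_self hε.le, rfl⟩ hlb
  have hinf_le : sInf (G '' closedBall x ε) ≤ G x - ε * S + c / 2 * ε :=
    (csInf_le ⟨_, hlb⟩ ⟨x + v, hball v hv, rfl⟩).trans hupper
  rw [Real.dist_eq, abs_lt, lt_sub_iff_add_lt, sub_lt_iff_lt_add, div_lt_iff₀ hε,
    lt_div_iff₀ hε]
  constructor <;> nlinarith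

theorem DifferentiableAt.fderiv_apply_single_eq_of_eventually_eq_affine {G : (ι → ℝ) → ℝ}
    {x : ι → ℝ} (hG : DifferentiableAt ℝ G x) {i : ι} {a b : ℝ}
    (h : ∀ᶠ s in 𝓝 (x i), G (Function.update x i s) = a * s + b) :
    fderiv ℝ G x (Pi.single i 1) = a := by
  have hline : HasDerivAt (fun s => G (Function.update x i s)) (fderiv ℝ G x (Pi.single i 1))
      (x i) := by
    have hG' : HasFDerivAt G (fderiv ℝ G x) (Function.update x i (x i)) := by
      rw [Function.update_eq_self]; exact hG.hasFDerivAt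
    exact hG'.comp_hasDerivAt (x i) (hasDerivAt_update x i (x i))
  have haffine : HasDerivAt (fun s => a * s + b) a (x i) := by
    simpa using ((hasDerivAt_id (x i)).const_mul a).add_const b
  exact hline.unique (haffine.congr_of_eventuallyEq h)

end Pi

variable {N : ℕ}

theorem wd_eq_zero_of_notMem_leaves (Q : Fin N → Fin N → ℝ) :
    ∀ {m : ℕ} (t : BT (Fin N) m) {i : Fin N}, i ∉ t.leaves → wd Q t i = 0
  | _, .leaf j, i, h => by simpa [BT.leaves, wd] using h
  | _, .node L R, i, h => by
    rw [BT.leaves, List.mem_append, not_or] at h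
    simp [wd, wd_eq_zero_of_notMem_leaves Q L h.1, wd_eq_zero_of_notMem_leaves Q R h.2]

theorem mul_sum_wd_mul_congr {Q Q' : Fin N → Fin N → ℝ} (h : ∀ i j, i ≠ j → Q i j = Q' i j)
    {m : ℕ} {A B : BT (Fin N) m} (hAB : ∀ a ∈ A.leaves, a ∉ B.leaves) (i : Fin N) :
    wd Q' A i * ∑ j, wd Q' B j * Q i j = wd Q' A i * ∑ j, wd Q' B j * Q' i j := by
  by_cases hi : i ∈ A.leaves
  · congr 1
    refine Finset.sum_congr rfl fun j _ => ?_
    by_cases hij : i = j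
    · rw [← hij, wd_eq_zero_of_notMem_leaves Q' B (hAB i hi), zero_mul, zero_mul]
    · rw [h i j hij]
  · rw [wd_eq_zero_of_notMem_leaves Q' A hi, zero_mul, zero_mul]

theorem wd_congr_of_offDiag {Q Q' : Fin N → Fin N → ℝ} (h : ∀ i j, i ≠ j → Q i j = Q' i j) :
    ∀ {m : ℕ} (t : BT (Fin N) m), t.leaves.Nodup → ∀ i, wd Q t i = wd Q' t i
  | _, .leaf j, _, i => rfl
  | _, .node L R, hnd, i => by
    rw [BT.leaves, List.nodup_append] at hnd
    obtain ⟨hL, hR, hLR⟩ := hnd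
    simp only [wd, wd_congr_of_offDiag h L hL, wd_congr_of_offDiag h R hR]
    rw [mul_sum_wd_mul_congr h (fun a ha hb => hLR a ha a hb rfl),
      mul_sum_wd_mul_congr h (fun a ha hb => hLR a hb a ha rfl)]

theorem differentiable_wd :
    ∀ {m : ℕ} (t : BT (Fin N) m) (i : Fin N), Differentiable ℝ fun Q => wd Q t i
  | _, .leaf j, i => differentiable_const _
  | _, .node L R, i => by
    have hL := differentiable_wd L
    have hR := differentiable_wd R
    simp only [wd]
    fun_prop

abbrev UpperPair (N : ℕ) := {q : Fin N × Fin N // q.1 < q.2}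

def upperPart (Q : Fin N → Fin N → ℝ) (q : UpperPair N) : ℝ := Q q.1.1 q.1.2

/-- The comparison matrix with strict upper triangle `x`; the diagonal, which `wd` ignores on a
draw, is copied from `P`. -/
def ofUpperPart (P : Fin N → Fin N → ℝ) (x : UpperPair N → ℝ) : Fin N → Fin N → ℝ :=
  fun i j => if h : i < j then x ⟨(i, j), h⟩ else if h : j < i then 1 - x ⟨(j, i), h⟩ else P i j

theorem differentiable_ofUpperPart {P : Fin N → Fin N → ℝ} :
    Differentiable ℝ (ofUpperPart P) :=
  differentiable_pi.2 fun i => differentiable_pi.2 fun j => by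
    by_cases hij : i < j
    · simp only [ofUpperPart, dif_pos hij]; fun_prop
    by_cases hji : j < i
    · simp only [ofUpperPart, dif_neg hij, dif_pos hji]; fun_prop
    · simp only [ofUpperPart, dif_neg hij, dif_neg hji]; fun_prop

theorem ofUpperPart_upperPart_of_ne {P Q : Fin N → Fin N → ℝ}
    (hQ : ∀ i j, i ≠ j → Q i j + Q j i = 1) {i j : Fin N} (hij : i ≠ j) :
    ofUpperPart P (upperPart Q) i j = Q i j := by
  rcases hij.lt_or_gt with h | h
  · simp [ofUpperPart, upperPart, h]
  · simp [ofUpperPart, upperPart, h, h.not_gt]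
    linarith [hQ i j hij]

theorem ofUpperPart_upperPart_self {P : Fin N → Fin N → ℝ} (hP : IsCompMatrix P) :
    ofUpperPart P (upperPart P) = P := by
  funext i j
  by_cases hij : i = j
  · simp [ofUpperPart, hij]
  · exact ofUpperPart_upperPart_of_ne (fun i j h => (hP i j h).2.2) hij

theorem ofUpperPart_update_upperPart {P : Fin N → Fin N → ℝ} (hP : IsCompMatrix P)
    (q : UpperPair N) (s : ℝ) :
    ofUpperPart P (Function.update (upperPart P) q s) = updPair P q.1.1 q.1.2 s := by
  obtain ⟨⟨k, l⟩, hkl⟩ := q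
  funext i j
  simp only [ofUpperPart, updPair, upperPart, Function.update_apply, Subtype.mk.injEq,
    Prod.mk.injEq]
  split_ifs <;> grind [IsCompMatrix]

theorem ofUpperPart_mem_perturbs {P : Fin N → Fin N → ℝ} (hP : IsCompMatrix P) {ε : ℝ}
    (hε : ∀ i j, i ≠ j → ε ≤ P i j) {x : UpperPair N → ℝ} (hx : x ∈ closedBall (upperPart P) ε) :
    ofUpperPart P x ∈ perturbs P ε := by
  have hxq (q : UpperPair N) : |x q - P q.1.1 q.1.2| ≤ ε := by
    have := (dist_le_pi_dist x (upperPart P) q).trans hx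
    rwa [Real.dist_eq] at this
  have hdev (i j : Fin N) (hij : i ≠ j) : |ofUpperPart P x i j - P i j| ≤ ε := by
    rcases hij.lt_or_gt with h | h
    · simpa [ofUpperPart, h] using hxq ⟨(i, j), h⟩
    · have := hxq ⟨(j, i), h⟩
      simp only [ofUpperPart, h, h.not_gt, dite_false, dite_true]
      rw [abs_sub_comm] at this
      convert this using 2
      linarith [(hP i j hij).2.2]
  refine ⟨fun i j hij => ⟨?_, ?_, ?_⟩, hdev⟩
  · linarith [(abs_le.1 (hdev i j hij)).1, hε i j hij]
  · linarith [(abs_le.1 (hdev i j hij)).2, hε j i hij.symm, (hP i j hij).2.2]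
  · rcases hij.lt_or_gt with h | h
    · simp [ofUpperPart, h, h.not_gt]
    · simp [ofUpperPart, h, h.not_gt]

theorem upperPart_mem_closedBall {P Q : Fin N → Fin N → ℝ} {ε : ℝ} (hε : 0 ≤ ε)
    (hQ : Q ∈ perturbs P ε) : upperPart Q ∈ closedBall (upperPart P) ε :=
  (dist_pi_le_iff hε).2 fun q => by
    rw [Real.dist_eq]; exact hQ.2 _ _ q.2.ne

theorem image_wd_perturbs_eq {P : Fin N → Fin N → ℝ} (hP : IsCompMatrix P) {m : ℕ}
    {σ : BT (Fin N) m} (hσ : σ.leaves.Nodup) (i : Fin N) {ε : ℝ} (hε0 : 0 ≤ ε)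
    (hε : ∀ i j, i ≠ j → ε ≤ P i j) :
    (fun Q => wd Q σ i) '' perturbs P ε =
      (fun x => wd (ofUpperPart P x) σ i) '' closedBall (upperPart P) ε := by
  ext w
  constructor
  · rintro ⟨Q, hQ, rfl⟩
    refine ⟨upperPart Q, upperPart_mem_closedBall hε0 hQ, ?_⟩
    exact wd_congr_of_offDiag (fun k l hkl =>
      ofUpperPart_upperPart_of_ne (fun k l h => (hQ.1 k l h).2.2) hkl) σ hσ i
  · rintro ⟨x, hx, rfl⟩
    exact ⟨ofUpperPart P x, ofUpperPart_mem_perturbs hP hε hx, rfl⟩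

/-- for a comparison matrix with all entries strictly between 0 and 1,
the ε-worst drop is `Σ_{k<l} |α_kl| · ε` to first order, where `α_kl` is the slope
of the affine map `t ↦ wp(i*, P[kl←t], σ)`. -/
theorem prob_drop_first_order (n : ℕ)
    (P : Fin (2 ^ n) → Fin (2 ^ n) → ℝ) (hP : IsCompMatrix P)
    (hpos : ∀ i j : Fin (2 ^ n), i ≠ j → 0 < P i j ∧ P i j < 1)
    (σ : BT (Fin (2 ^ n)) n) (hσ : IsDraw σ) (istar : Fin (2 ^ n))
    (α : Fin (2 ^ n) → Fin (2 ^ n) → ℝ)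
    (hα : ∀ k l : Fin (2 ^ n), k < l → ∃ β : ℝ, ∀ t ∈ Set.Icc (0 : ℝ) 1,
      wd (updPair P k l t) σ istar = α k l * t + β) :
    Filter.Tendsto (fun ε : ℝ => (wd P σ istar - wpe istar P ε σ) / ε)
      (nhdsWithin 0 (Set.Ioi 0))
      (nhds (∑ q ∈ Finset.univ.filter
        (fun q : Fin (2 ^ n) × Fin (2 ^ n) => q.1 < q.2), |α q.1 q.2|)) := by
  have hnd : σ.leaves.Nodup := List.nodup_iff_count_le_one.2 fun i => (hσ i).le
  set G := fun x => wd (ofUpperPart P x) σ istar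
  have hG : DifferentiableAt ℝ G (upperPart P) :=
    ((differentiable_wd σ istar).comp differentiable_ofUpperPart).differentiableAt
  have hslope (q : UpperPair (2 ^ n)) :
      fderiv ℝ G (upperPart P) (Pi.single q 1) = α q.1.1 q.1.2 := by
    obtain ⟨β, hβ⟩ := hα q.1.1 q.1.2 q.2
    refine hG.fderiv_apply_single_eq_of_eventually_eq_affine (b := β) ?_
    filter_upwards [Ioo_mem_nhds (hpos _ _ q.2.ne).1 (hpos _ _ q.2.ne).2] with s hs
    simp only [G, ofUpperPart_update_upperPart hP]
    exact hβ s ⟨hs.1.le, hs.2.le⟩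
  have hmargin : ∀ᶠ ε in 𝓝 (0 : ℝ), ∀ i j, i ≠ j → ε ≤ P i j :=
    Filter.eventually_all.2 fun i => Filter.eventually_all.2 fun j =>
      Filter.eventually_imp_distrib_left.2 fun hij => eventually_le_nhds (hpos i j hij).1
  have hG_eq : G (upperPart P) = wd P σ istar := by simp only [G, ofUpperPart_upperPart_self hP]
  rw [Finset.sum_subtype _ (fun q => Finset.mem_filter_univ q)]
  simp only [← hslope]
  refine (hG.hasFDerivAt.tendsto_sub_sInf_image_closedBall_div).congr' ?_
  filter_upwards [nhdsWithin_le_nhds hmargin, self_mem_nhdsWithin] with ε hε hε0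
  rw [wpe, image_wd_perturbs_eq hP hnd istar (le_of_lt hε0) hε, ← hG_eq]
end

section
/- For every n ≥ 2 there exists ε₀ > 0 such that for all ε ∈ (0, ε₀) the following holds for the small/medium/big tournament with parameter ε on N = 2^{n+1} players (with arbitrary entries within each of the three groups): a draw σ maximizes wp(1,P,σ) over all draws if and only if the half of the draw containing player 1 consists exactly of player 1 together with all the small players, and in the other half every first-round match pairs a medium player with a big player. -/
/-- The small players of the small/medium/big tournament: players `2, …, 2^n`
(indices `1, …, 2^n - 1`). -/
def smalls (n : ℕ) : Finset (Fin (2 ^ (n + 1))) :=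
  Finset.univ.filter (fun i => 1 ≤ (i : ℕ) ∧ (i : ℕ) < 2 ^ n)

/-- The medium players: players `2^n + 1, …, 2^n + 2^(n-1)` (indices
`2^n, …, 2^n + 2^(n-1) - 1`). -/
def mediums (n : ℕ) : Finset (Fin (2 ^ (n + 1))) :=
  Finset.univ.filter (fun i => 2 ^ n ≤ (i : ℕ) ∧ (i : ℕ) < 2 ^ n + 2 ^ (n - 1))

/-- The big players: players `2^n + 2^(n-1) + 1, …, 2^(n+1)`. -/
def bigs (n : ℕ) : Finset (Fin (2 ^ (n + 1))) :=
  Finset.univ.filter (fun i => 2 ^ n + 2 ^ (n - 1) ≤ (i : ℕ))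

/-- The comparison-matrix constraints of the small/medium/big tournament with
parameter `ε`; entries within each group are arbitrary. -/
def SMBMatrix (n : ℕ) (ε : ℝ) (P : Fin (2 ^ (n + 1)) → Fin (2 ^ (n + 1)) → ℝ) : Prop :=
  IsCompMatrix P ∧
  (∀ s ∈ smalls n, P ⟨0, by positivity⟩ s = 1) ∧
  (∀ m ∈ mediums n, P ⟨0, by positivity⟩ m = 0.4) ∧
  (∀ b ∈ bigs n, P ⟨0, by positivity⟩ b = 0.6) ∧
  (∀ s ∈ smalls n, ∀ m ∈ mediums n, P s m = 0) ∧
  (∀ s ∈ smalls n, ∀ b ∈ bigs n, P s b = 0) ∧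
  (∀ m ∈ mediums n, ∀ b ∈ bigs n, P m b = 0.5 - ε / 2)

/-- Every first-round match of `t` pairs a medium player with a big player. -/
def MBPaired (n : ℕ) {m : ℕ} (t : BT (Fin (2 ^ (n + 1))) m) : Prop :=
  ∀ q ∈ firstPairs t,
    (q.1 ∈ mediums n ∧ q.2 ∈ bigs n) ∨ (q.1 ∈ bigs n ∧ q.2 ∈ mediums n)

/-- The half of the draw containing player 1 consists exactly of player 1 together
with all the small players, and in the other half every first-round match pairs a
medium player with a big player. -/
def OptShape (n : ℕ) (σ : BT (Fin (2 ^ (n + 1))) (n + 1)) : Prop :=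
  ∃ L R : BT (Fin (2 ^ (n + 1))) n, σ = BT.node L R ∧
    (((L.leaves : Multiset (Fin (2 ^ (n + 1)))) =
        (insert ⟨0, by positivity⟩ (smalls n)).val ∧ MBPaired n R) ∨
     ((R.leaves : Multiset (Fin (2 ^ (n + 1)))) =
        (insert ⟨0, by positivity⟩ (smalls n)).val ∧ MBPaired n L))


/-!
If player 1's half consists of player 1 and the smalls, player 1 wins it surely and then beats the
winner of the other half with probability `0.4 + 0.2 β`, where `β` is the probability that a big
player wins that medium/big half. Otherwise each half contains a medium or big player, and player 1
wins with probability at most `0.6 · 0.6 < 0.4`.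

Labelling bigs by `1` and mediums by `0`, `β = Bp (1/2 + ε/2)` of the other half. Expanding
`Bp (1/2 + δ) t = mean t + δ · slope t + O(δ²)`, the slope of a tree of depth `m` is at most
`(m + 1)/2 - |2 mean t - 1|/2`, with equality for trees whose first-round matches are all mixed,
and with a deficit of `2^(-m)` when two equal labels meet in the first round. So for small `ε`
exactly the draws whose other half is paired medium–big in the first round are optimal.
-/

namespace BT

variable {α β : Type}

theorem length_leaves : ∀ {m : ℕ} (t : BT α m), t.leaves.length = 2 ^ m
  | _, .leaf _ => rfl
  | _, .node L R => by simp [leaves, length_leaves L, length_leaves R, pow_succ, mul_two]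

theorem leaves_map (f : α → β) : ∀ {m : ℕ} (t : BT α m), (t.map f).leaves = t.leaves.map f
  | _, .leaf _ => rfl
  | _, .node L R => by simp [map, leaves, leaves_map f L, leaves_map f R]

theorem exists_leaves_eq :
    ∀ (m : ℕ) (l : List α), l.length = 2 ^ m → ∃ t : BT α m, t.leaves = l
  | 0, l, hl => by
      obtain ⟨a, rfl⟩ := List.length_eq_one_iff.1 hl
      exact ⟨.leaf a, rfl⟩
  | m + 1, l, hl => by
      obtain ⟨L, hL⟩ := exists_leaves_eq m (l.take (2 ^ m)) (by simp [hl, pow_succ])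
      obtain ⟨R, hR⟩ := exists_leaves_eq m (l.drop (2 ^ m)) (by simp [hl, pow_succ, mul_two])
      exact ⟨.node L R, by rw [leaves, hL, hR, List.take_append_drop]⟩

theorem two_pow_le_card_of_subset {m : ℕ} {t : BT α m} {s : Finset α}
    (ht : t.leaves.Nodup) (hs : ∀ x ∈ t.leaves, x ∈ s) : 2 ^ m ≤ s.card := by
  simpa [length_leaves] using
    Multiset.card_le_card ((Multiset.le_iff_subset (Multiset.coe_nodup.2 ht)).2 hs)

theorem coe_leaves_eq_of_subset {m : ℕ} {t : BT α m} {s : Finset α}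
    (ht : t.leaves.Nodup) (hs : ∀ x ∈ t.leaves, x ∈ s) (hcard : s.card ≤ 2 ^ m) :
    (t.leaves : Multiset α) = s.val :=
  Multiset.eq_of_le_of_card_le ((Multiset.le_iff_subset (Multiset.coe_nodup.2 ht)).2 hs)
    (by simpa [length_leaves] using hcard)

end BT

theorem pairList_append {α : Type} :
    ∀ (l₁ l₂ : List α), Even l₁.length →
      pairList (l₁ ++ l₂) = pairList l₁ ++ pairList l₂
  | [], _, _ => rfl
  | [_], _, h => by simp at h
  | a :: b :: l₁, l₂, h => by
      simp only [List.cons_append, pairList,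
        pairList_append l₁ l₂ (by simpa [parity_simps] using h)]

theorem pairList_map {α β : Type} (f : α → β) :
    ∀ l : List α, pairList (l.map f) = (pairList l).map (Prod.map f f)
  | [] => rfl
  | [_] => rfl
  | a :: b :: l => by simp [pairList, pairList_map f l]

theorem mem_of_mem_pairList {α : Type} :
    ∀ {l : List α} {q : α × α}, q ∈ pairList l → q.1 ∈ l ∧ q.2 ∈ l
  | a :: b :: l, q, h => by
      rcases List.mem_cons.1 h with rfl | h
      · simp
      · have := mem_of_mem_pairList h
        simp [this]

theorem pairList_flatMap {α : Type} :
    ∀ ps : List (α × α), pairList (ps.flatMap fun q => [q.1, q.2]) = ps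
  | [] => rfl
  | q :: ps => by simp [pairList, pairList_flatMap ps]

theorem List.flatMap_zip_perm {α : Type} :
    ∀ {l₁ l₂ : List α}, l₁.length = l₂.length →
      ((l₁.zip l₂).flatMap fun q => [q.1, q.2]).Perm (l₁ ++ l₂)
  | [], [], _ => .refl _
  | a :: l₁, b :: l₂, h => by
      simp only [List.zip_cons_cons, List.flatMap_cons, List.cons_append, List.nil_append]
      exact .cons a
        ((List.flatMap_zip_perm (by simpa using h)).cons b |>.trans List.perm_middle.symm)

theorem firstPairs_node {α : Type} {m : ℕ} (L R : BT α (m + 1)) :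
    firstPairs (.node L R) = firstPairs L ++ firstPairs R :=
  pairList_append _ _ (by rw [BT.length_leaves, pow_succ]; exact even_two.mul_left _)

theorem firstPairs_map {α β : Type} (f : α → β) {m : ℕ} (t : BT α m) :
    firstPairs (t.map f) = (firstPairs t).map (Prod.map f f) := by
  rw [firstPairs, firstPairs, BT.leaves_map, pairList_map]

section Tournament

variable {N : ℕ} {P : Fin N → Fin N → ℝ}

noncomputable def beatProb (P : Fin N → Fin N → ℝ) {m : ℕ} (t : BT (Fin N) m) (i : Fin N) :
    ℝ :=
  ∑ j, wd P t j * P i j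

theorem wd_node {m : ℕ} (L R : BT (Fin N) m) (i : Fin N) :
    wd P (.node L R) i = wd P L i * beatProb P R i + wd P R i * beatProb P L i :=
  rfl

theorem wd_node_comm {m : ℕ} (L R : BT (Fin N) m) : wd P (.node L R) = wd P (.node R L) := by
  funext i
  rw [wd_node, wd_node, add_comm]

theorem wd_eq_zero_of_notMem (P : Fin N → Fin N → ℝ) :
    ∀ {m : ℕ} {t : BT (Fin N) m} {i : Fin N}, i ∉ t.leaves → wd P t i = 0
  | _, .leaf _, _, hi => by simpa [wd, BT.leaves] using hi
  | _, .node _ _, _, hi => by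
      simp only [BT.leaves, List.mem_append, not_or] at hi
      simp [wd_node, wd_eq_zero_of_notMem P hi.1, wd_eq_zero_of_notMem P hi.2]

theorem wd_node_of_notMem_right {m : ℕ} {L R : BT (Fin N) m} {i : Fin N} (hi : i ∉ R.leaves) :
    wd P (.node L R) i = wd P L i * beatProb P R i := by
  rw [wd_node, wd_eq_zero_of_notMem P hi, zero_mul, add_zero]

theorem nodup_leaves_node {m : ℕ} {L R : BT (Fin N) m} :
    (BT.node L R).leaves.Nodup ↔
      L.leaves.Nodup ∧ R.leaves.Nodup ∧ ∀ i ∈ L.leaves, i ∉ R.leaves := by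
  simp only [BT.leaves, List.nodup_append]
  exact and_congr_right' (and_congr_right' ⟨fun h i hL hR => h i hL i hR rfl,
    fun h i hL j hR hij => h i hL (hij ▸ hR)⟩)

/-- The winner lies in `S` if both finalists do; otherwise it is decided by a match across `S`. -/
theorem sum_wd_node (hP : IsCompMatrix P) {m : ℕ} {L R : BT (Fin N) m}
    (hLR : ∀ i ∈ L.leaves, i ∉ R.leaves) (S : Finset (Fin N)) :
    ∑ i ∈ S, wd P (.node L R) i = (∑ i ∈ S, wd P L i) * (∑ i ∈ S, wd P R i) +
      ∑ i ∈ S, ∑ j ∈ Sᶜ, (wd P L i * wd P R j + wd P R i * wd P L j) * P i j := by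
  set f : Fin N → Fin N → ℝ := fun i j => (wd P L i * wd P R j + wd P R i * wd P L j) * P i j
  have hpair : ∀ i j, wd P L i * wd P R j * P i j + wd P L i * wd P R j * P j i =
      wd P L i * wd P R j := by
    intro i j
    by_cases hi : i ∈ L.leaves
    · by_cases hj : j ∈ R.leaves
      · rw [← mul_add, (hP i j fun h => hLR i hi (h ▸ hj)).2.2, mul_one]
      · simp [wd_eq_zero_of_notMem P hj]
    · simp [wd_eq_zero_of_notMem P hi]
  have hSS :
      ∑ i ∈ S, ∑ j ∈ S, f i j = (∑ i ∈ S, wd P L i) * (∑ i ∈ S, wd P R i) := by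
    simp only [f, add_mul, Finset.sum_add_distrib]
    rw [Finset.sum_comm (f := fun i j => wd P R i * wd P L j * P i j), ← Finset.sum_add_distrib,
      Finset.sum_mul_sum]
    refine Finset.sum_congr rfl fun i _ => ?_
    rw [← Finset.sum_add_distrib]
    exact Finset.sum_congr rfl fun j _ => by linear_combination hpair i j
  calc ∑ i ∈ S, wd P (.node L R) i = ∑ i ∈ S, ∑ j, f i j := by
        refine Finset.sum_congr rfl fun i _ => ?_
        simp only [wd_node, beatProb, f, Finset.mul_sum, ← Finset.sum_add_distrib]
        exact Finset.sum_congr rfl fun j _ => by ring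
    _ = ∑ i ∈ S, ∑ j ∈ S, f i j + ∑ i ∈ S, ∑ j ∈ Sᶜ, f i j := by
        rw [← Finset.sum_add_distrib]
        exact Finset.sum_congr rfl fun i _ => (Finset.sum_add_sum_compl S _).symm
    _ = _ := by rw [hSS]

theorem sum_wd_eq_one (hP : IsCompMatrix P) :
    ∀ {m : ℕ} (t : BT (Fin N) m), t.leaves.Nodup → ∑ i, wd P t i = 1
  | _, .leaf _, _ => by simp [wd]
  | _, .node L R, hnd => by
      obtain ⟨hL, hR, hLR⟩ := nodup_leaves_node.1 hnd
      rw [sum_wd_node hP hLR, sum_wd_eq_one hP L hL, sum_wd_eq_one hP R hR]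
      simp

theorem beatProb_nonneg (hP : IsCompMatrix P) {m : ℕ} {t : BT (Fin N) m}
    (ht : ∀ j, 0 ≤ wd P t j) {i : Fin N} (hi : i ∉ t.leaves) : 0 ≤ beatProb P t i := by
  refine Finset.sum_nonneg fun j _ => ?_
  by_cases hj : j = i
  · rw [hj, wd_eq_zero_of_notMem P hi, zero_mul]
  · exact mul_nonneg (ht j) (hP i j (Ne.symm hj)).1

theorem wd_nonneg (hP : IsCompMatrix P) :
    ∀ {m : ℕ} (t : BT (Fin N) m), t.leaves.Nodup → ∀ i, 0 ≤ wd P t i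
  | _, .leaf _, _, i => by unfold wd; split <;> norm_num
  | _, .node L R, hnd, i => by
      obtain ⟨hL, hR, hLR⟩ := nodup_leaves_node.1 hnd
      have hwL := wd_nonneg hP L hL
      have hwR := wd_nonneg hP R hR
      rw [wd_node]
      by_cases hi : i ∈ L.leaves
      · rw [wd_eq_zero_of_notMem P (hLR i hi), zero_mul, add_zero]
        exact mul_nonneg (hwL i) (beatProb_nonneg hP hwR (hLR i hi))
      · rw [wd_eq_zero_of_notMem P hi, zero_mul, zero_add]
        exact mul_nonneg (hwR i) (beatProb_nonneg hP hwL hi)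

theorem sum_wd_le_one (hP : IsCompMatrix P) {m : ℕ} {t : BT (Fin N) m} (ht : t.leaves.Nodup)
    (S : Finset (Fin N)) : ∑ i ∈ S, wd P t i ≤ 1 :=
  sum_wd_eq_one hP t ht ▸
    Finset.sum_le_sum_of_subset_of_nonneg S.subset_univ fun j _ _ => wd_nonneg hP t ht j

theorem wd_le_one (hP : IsCompMatrix P) {m : ℕ} {t : BT (Fin N) m} (ht : t.leaves.Nodup)
    (i : Fin N) : wd P t i ≤ 1 := by
  simpa using sum_wd_le_one hP ht {i}

theorem beatProb_le_one (hP : IsCompMatrix P) {m : ℕ} {t : BT (Fin N) m} (ht : t.leaves.Nodup)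
    {i : Fin N} (hi : i ∉ t.leaves) : beatProb P t i ≤ 1 := by
  rw [← sum_wd_eq_one hP t ht]
  refine Finset.sum_le_sum fun j _ => ?_
  by_cases hj : j = i
  · rw [hj, wd_eq_zero_of_notMem P hi, zero_mul]
  · exact mul_le_of_le_one_right (wd_nonneg hP t ht j) (hP i j (Ne.symm hj)).2.1

theorem wd_eq_zero_of_dominated {W : Finset (Fin N)} (hW : ∀ w ∈ W, ∀ j ∉ W, P w j = 0) :
    ∀ {m : ℕ} (t : BT (Fin N) m), (∃ j ∈ t.leaves, j ∉ W) → ∀ w ∈ W, wd P t w = 0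
  | _, .leaf _, ⟨j, hj, hjW⟩, w, hw => by
      simp only [BT.leaves, List.mem_singleton] at hj
      subst hj
      simp [wd, show w ≠ j from fun h => hjW (h ▸ hw)]
  | _, .node L R, ⟨j, hj, hjW⟩, w, hw => by
      have key : ∀ {k : ℕ} (A B : BT (Fin N) k), (∀ w ∈ W, wd P A w = 0) →
          wd P (.node A B) w = 0 := by
        intro _ A B hA
        rw [wd_node, hA w hw, zero_mul, zero_add]
        refine mul_eq_zero_of_right _ (Finset.sum_eq_zero fun i _ => ?_)
        by_cases hi : i ∈ W
        · rw [hA i hi, zero_mul]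
        · rw [hW w hw i hi, mul_zero]
      rcases List.mem_append.1 hj with hj | hj
      · exact key L R (wd_eq_zero_of_dominated hW L ⟨j, hj, hjW⟩)
      · rw [wd_node_comm]
        exact key R L (wd_eq_zero_of_dominated hW R ⟨j, hj, hjW⟩)

theorem wd_eq_one_of_forall_beats (hP : IsCompMatrix P) {i : Fin N} :
    ∀ {m : ℕ} (t : BT (Fin N) m), t.leaves.Nodup → i ∈ t.leaves →
      (∀ j ∈ t.leaves, j ≠ i → P i j = 1) → wd P t i = 1
  | _, .leaf _, _, hi, _ => by simp_all [wd, BT.leaves]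
  | _, .node L R, hnd, hi, hbeat => by
      obtain ⟨hL, hR, hLR⟩ := nodup_leaves_node.1 hnd
      have key : ∀ {k : ℕ} (A B : BT (Fin N) k), B.leaves.Nodup → i ∉ B.leaves →
          wd P A i = 1 → (∀ j ∈ B.leaves, P i j = 1) → wd P (.node A B) i = 1 := by
        intro _ A B hB hiB hA hbeatB
        rw [wd_node_of_notMem_right hiB, hA, one_mul, ← sum_wd_eq_one hP B hB]
        refine Finset.sum_congr rfl fun j _ => ?_
        by_cases hj : j ∈ B.leaves
        · rw [hbeatB j hj, mul_one]
        · rw [wd_eq_zero_of_notMem P hj, zero_mul]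
      rcases List.mem_append.1 hi with hiL | hiR
      · refine key L R hR (hLR i hiL) ?_ fun j hj => hbeat j (List.mem_append_right _ hj)
            fun h => hLR i hiL (h ▸ hj)
        exact wd_eq_one_of_forall_beats hP L hL hiL fun j hj => hbeat j (List.mem_append_left _ hj)
      · have hiL : i ∉ L.leaves := fun h => hLR i h hiR
        rw [wd_node_comm]
        refine key R L hL hiL ?_ fun j hj => hbeat j (List.mem_append_left _ hj)
            fun h => hiL (h ▸ hj)
        exact wd_eq_one_of_forall_beats hP R hR hiR fun j hj => hbeat j (List.mem_append_right _ hj)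

theorem isDraw_iff {m : ℕ} {t : BT (Fin N) m} :
    IsDraw t ↔ (t.leaves : Multiset (Fin N)) = Finset.univ.val := by
  simp [IsDraw, Multiset.ext, Multiset.count_univ]

theorem IsDraw.nodup {m : ℕ} {t : BT (Fin N) m} (h : IsDraw t) : t.leaves.Nodup :=
  Multiset.coe_nodup.1 (isDraw_iff.1 h ▸ Finset.univ.nodup)

theorem IsDraw.swap {m : ℕ} {L R : BT (Fin N) m} (h : IsDraw (.node L R)) :
    IsDraw (.node R L) := by
  rw [isDraw_iff] at h ⊢
  simp only [BT.leaves, ← Multiset.coe_add] at h ⊢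
  rwa [add_comm]

theorem IsDraw.mem {m : ℕ} {t : BT (Fin N) m} (h : IsDraw t) (i : Fin N) : i ∈ t.leaves := by
  simpa using congrArg (i ∈ ·) (isDraw_iff.1 h)

end Tournament

section Bp

open Set

namespace BT

/-- The derivative of `δ ↦ Bp (1/2 + δ) t` at `δ = 0`. -/
noncomputable def slope : ∀ {m : ℕ}, BT ℝ m → ℝ
  | _, .leaf _ => 0
  | _, .node L R =>
      (slope L + slope R) / 2 + (Bp (1 / 2) L + Bp (1 / 2) R - 2 * Bp (1 / 2) L * Bp (1 / 2) R)

def IsMixed {m : ℕ} (t : BT ℝ m) : Prop :=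
  ∀ q ∈ firstPairs t, (q.1 = 0 ∧ q.2 = 1) ∨ (q.1 = 1 ∧ q.2 = 0)

def mixed : (m : ℕ) → BT ℝ (m + 1)
  | 0 => .node (.leaf 1) (.leaf 0)
  | m + 1 => .node (mixed m) (mixed m)

end BT

theorem ZeroOne.forall_mem_Icc {m : ℕ} {t : BT ℝ m} (ht : ZeroOne t) :
    ∀ x ∈ t.leaves, x ∈ Icc (0 : ℝ) 1 := fun x hx => by
  rcases ht x hx with rfl | rfl <;> norm_num

theorem fp_half_add (δ x y : ℝ) :
    fp (1 / 2 + δ) x y = (x + y) / 2 + δ * (x + y - 2 * x * y) := by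
  unfold fp; ring

theorem fp_half (x y : ℝ) : fp (1 / 2) x y = (x + y) / 2 := by
  unfold fp; ring

theorem fp_mem_Icc {p x y : ℝ} (hp : p ∈ Icc 0 1) (hx : x ∈ Icc 0 1) (hy : y ∈ Icc 0 1) :
    fp p x y ∈ Icc 0 1 := by
  obtain ⟨hp0, hp1⟩ := hp; obtain ⟨hx0, hx1⟩ := hx; obtain ⟨hy0, hy1⟩ := hy
  unfold fp
  constructor <;> nlinarith [mul_nonneg hx0 hy0, mul_nonneg (sub_nonneg.2 hx1) (sub_nonneg.2 hy1),
    mul_nonneg hp0 (mul_nonneg hx0 (sub_nonneg.2 hy1)),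
    mul_nonneg hp0 (mul_nonneg hy0 (sub_nonneg.2 hx1)),
    mul_nonneg (sub_nonneg.2 hp1) (mul_nonneg hx0 (sub_nonneg.2 hy1)),
    mul_nonneg (sub_nonneg.2 hp1) (mul_nonneg hy0 (sub_nonneg.2 hx1))]

theorem Bp_mem_Icc {p : ℝ} (hp : p ∈ Icc 0 1) :
    ∀ {m : ℕ} {t : BT ℝ m}, (∀ x ∈ t.leaves, x ∈ Icc 0 1) → Bp p t ∈ Icc 0 1
  | _, .leaf x, ht => ht x (List.mem_singleton_self x)
  | _, .node _ _, ht => fp_mem_Icc hp (Bp_mem_Icc hp fun x hx => ht x (List.mem_append_left _ hx))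
      (Bp_mem_Icc hp fun x hx => ht x (List.mem_append_right _ hx))

theorem Bp_half_eq : ∀ {m : ℕ} (t : BT ℝ m), Bp (1 / 2) t = t.leaves.sum / 2 ^ m
  | _, .leaf x => by simp [Bp, BT.leaves]
  | _, .node L R => by
      rw [Bp, fp_half, Bp_half_eq L, Bp_half_eq R, BT.leaves, List.sum_append]
      field_simp
      ring

theorem abs_Bp_sub_Bp_half_le {δ : ℝ} (hδ : δ ∈ Icc 0 (1 / 2)) :
    ∀ {m : ℕ} {t : BT ℝ m}, (∀ x ∈ t.leaves, x ∈ Icc 0 1) →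
      |Bp (1 / 2 + δ) t - Bp (1 / 2) t| ≤ m * δ
  | _, .leaf x, _ => by simp [Bp]
  | m + 1, .node L R, ht => by
      have htL : ∀ x ∈ L.leaves, x ∈ Icc 0 1 := fun x hx => ht x (List.mem_append_left _ hx)
      have htR : ∀ x ∈ R.leaves, x ∈ Icc 0 1 := fun x hx => ht x (List.mem_append_right _ hx)
      have hp : 1 / 2 + δ ∈ Icc (0 : ℝ) 1 := ⟨by linarith [hδ.1], by linarith [hδ.2]⟩
      obtain ⟨hx0, hx1⟩ := Bp_mem_Icc hp htL
      obtain ⟨hy0, hy1⟩ := Bp_mem_Icc hp htR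
      have hL := abs_le.1 (abs_Bp_sub_Bp_half_le hδ htL)
      have hR := abs_le.1 (abs_Bp_sub_Bp_half_le hδ htR)
      set x := Bp (1 / 2 + δ) L
      set y := Bp (1 / 2 + δ) R
      have hq0 : 0 ≤ x + y - 2 * x * y := by nlinarith [mul_nonneg hx0 (sub_nonneg.2 hy1)]
      have hq1 : x + y - 2 * x * y ≤ 1 := by
        nlinarith [mul_nonneg (sub_nonneg.2 hx1) (sub_nonneg.2 hy1)]
      have h1 := mul_nonneg hδ.1 hq0
      have h2 := mul_nonneg hδ.1 (sub_nonneg.2 hq1)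
      rw [Bp, Bp, fp_half_add, fp_half, abs_le]
      push_cast
      constructor <;> linarith [hL.1, hL.2, hR.1, hR.2]

theorem abs_Bp_sub_linear_le {δ : ℝ} (hδ : δ ∈ Icc 0 (1 / 2)) :
    ∀ {m : ℕ} {t : BT ℝ m}, (∀ x ∈ t.leaves, x ∈ Icc 0 1) →
      |Bp (1 / 2 + δ) t - Bp (1 / 2) t - δ * t.slope| ≤ m ^ 2 * δ ^ 2
  | _, .leaf x, _ => by simp [Bp, BT.slope]
  | m + 1, .node L R, ht => by
      have htL : ∀ x ∈ L.leaves, x ∈ Icc 0 1 := fun x hx => ht x (List.mem_append_left _ hx)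
      have htR : ∀ x ∈ R.leaves, x ∈ Icc 0 1 := fun x hx => ht x (List.mem_append_right _ hx)
      have hp : 1 / 2 + δ ∈ Icc (0 : ℝ) 1 := ⟨by linarith [hδ.1], by linarith [hδ.2]⟩
      have hdL := abs_Bp_sub_linear_le hδ htL
      have hdR := abs_Bp_sub_linear_le hδ htR
      have hxa := abs_Bp_sub_Bp_half_le hδ htL
      have hyb := abs_Bp_sub_Bp_half_le hδ htR
      obtain ⟨hy0, hy1⟩ := Bp_mem_Icc hp htR
      obtain ⟨ha0, ha1⟩ := Bp_mem_Icc (p := 1 / 2) ⟨by norm_num, by norm_num⟩ htL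
      set x := Bp (1 / 2 + δ) L
      set y := Bp (1 / 2 + δ) R
      set a := Bp (1 / 2) L
      set b := Bp (1 / 2) R
      have hcross : |(x - a) * (1 - 2 * y) + (y - b) * (1 - 2 * a)| ≤ 2 * m * δ := by
        have h1 : |1 - 2 * y| ≤ 1 := abs_le.2 ⟨by linarith, by linarith⟩
        have h2 : |1 - 2 * a| ≤ 1 := abs_le.2 ⟨by linarith, by linarith⟩
        calc _ ≤ |x - a| * |1 - 2 * y| + |y - b| * |1 - 2 * a| := by
                rw [← abs_mul, ← abs_mul]; exact abs_add_le _ _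
          _ ≤ m * δ * 1 + m * δ * 1 := by
                have hmδ : 0 ≤ (m : ℝ) * δ := mul_nonneg m.cast_nonneg hδ.1
                exact add_le_add (mul_le_mul hxa h1 (abs_nonneg _) hmδ)
                  (mul_le_mul hyb h2 (abs_nonneg _) hmδ)
          _ = 2 * m * δ := by ring
      have hid : Bp (1 / 2 + δ) (.node L R) - Bp (1 / 2) (.node L R) - δ * (BT.node L R).slope =
          ((x - a - δ * L.slope) + (y - b - δ * R.slope)) / 2 +
            δ * ((x - a) * (1 - 2 * y) + (y - b) * (1 - 2 * a)) := by
        simp only [Bp, BT.slope, fp_half_add, fp_half]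
        ring
      rw [hid]
      calc _ ≤ |((x - a - δ * L.slope) + (y - b - δ * R.slope)) / 2| +
              |δ * ((x - a) * (1 - 2 * y) + (y - b) * (1 - 2 * a))| := abs_add_le _ _
        _ ≤ (|x - a - δ * L.slope| + |y - b - δ * R.slope|) / 2 +
              δ * |(x - a) * (1 - 2 * y) + (y - b) * (1 - 2 * a)| := by
            rw [abs_div, abs_two, abs_mul, abs_of_nonneg hδ.1]
            gcongr
            exact abs_add_le _ _
        _ ≤ (m ^ 2 * δ ^ 2 + m ^ 2 * δ ^ 2) / 2 + δ * (2 * m * δ) := by gcongr; exact hδ.1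
        _ ≤ ((m + 1 : ℕ) : ℝ) ^ 2 * δ ^ 2 := by push_cast; nlinarith [sq_nonneg δ]

theorem abs_add_le_abs_add_abs_add_two_mul {u v : ℝ} (hu : |u| ≤ 1) (hv : |v| ≤ 1) :
    |u + v| ≤ |u| + |v| + 2 * (u * v) := by
  rcases abs_cases u with ⟨hu', _⟩ | ⟨hu', _⟩ <;>
    rcases abs_cases v with ⟨hv', _⟩ | ⟨hv', _⟩ <;>
    rcases abs_cases (u + v) with ⟨h, _⟩ | ⟨h, _⟩ <;> rw [hu', hv', h] <;>
    rw [hu'] at hu <;> rw [hv'] at hv <;> nlinarith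

theorem slope_node_le {M dL dR a b c : ℝ} (ha : a ∈ Icc 0 1) (hb : b ∈ Icc 0 1)
    (hL : dL ≤ (M + 1) / 2 - |2 * a - 1| / 2 - c) (hR : dR ≤ (M + 1) / 2 - |2 * b - 1| / 2) :
    (dL + dR) / 2 + (a + b - 2 * a * b) ≤ (M + 2) / 2 - |2 * ((a + b) / 2) - 1| / 2 - c / 2 := by
  have key := abs_add_le_abs_add_abs_add_two_mul (u := 2 * a - 1) (v := 2 * b - 1)
    (abs_le.2 ⟨by linarith [ha.1], by linarith [ha.2]⟩)
    (abs_le.2 ⟨by linarith [hb.1], by linarith [hb.2]⟩)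
  have e : 2 * ((a + b) / 2) - 1 = ((2 * a - 1) + (2 * b - 1)) / 2 := by ring
  rw [e, abs_div, abs_two]
  nlinarith

theorem slope_le : ∀ {m : ℕ} {t : BT ℝ m}, (∀ x ∈ t.leaves, x ∈ Icc 0 1) →
    t.slope ≤ (m + 1) / 2 - |2 * Bp (1 / 2) t - 1| / 2
  | _, .leaf x, ht => by
      obtain ⟨h0, h1⟩ := ht x (List.mem_singleton_self x)
      have := abs_le.2 (⟨by linarith, by linarith⟩ : -1 ≤ 2 * x - 1 ∧ 2 * x - 1 ≤ 1)
      simp only [BT.slope, Bp, CharP.cast_eq_zero]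
      linarith
  | m + 1, .node L R, ht => by
      have htL : ∀ x ∈ L.leaves, x ∈ Icc 0 1 := fun x hx => ht x (List.mem_append_left _ hx)
      have htR : ∀ x ∈ R.leaves, x ∈ Icc 0 1 := fun x hx => ht x (List.mem_append_right _ hx)
      have hmid : (1 / 2 : ℝ) ∈ Icc 0 1 := ⟨by norm_num, by norm_num⟩
      have := slope_node_le (c := 0) (Bp_mem_Icc hmid htL) (Bp_mem_Icc hmid htR)
        (by simpa using slope_le htL) (slope_le htR)
      simp only [BT.slope, Bp, fp_half]
      push_cast
      linarith

theorem slope_le_of_exists_eq : ∀ {m : ℕ} {t : BT ℝ (m + 1)}, ZeroOne t →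
    (∃ q ∈ firstPairs t, q.1 = q.2) →
      t.slope ≤ (m + 2) / 2 - |2 * Bp (1 / 2) t - 1| / 2 - (1 / 2) ^ (m + 1)
  | 0, .node (.leaf x) (.leaf y), ht, ⟨q, hq, hxy⟩ => by
      obtain rfl : q = (x, y) := by simpa [firstPairs, pairList, BT.leaves] using hq
      obtain rfl : x = y := hxy
      rcases ht x (List.mem_cons_self ..) with rfl | rfl <;>
        norm_num [BT.slope, Bp, fp_half]
  | m + 1, .node L R, ht, ⟨q, hq, hxy⟩ => by
      have htL : ZeroOne L := fun x hx => ht x (List.mem_append_left _ hx)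
      have htR : ZeroOne R := fun x hx => ht x (List.mem_append_right _ hx)
      have hmid : (1 / 2 : ℝ) ∈ Icc 0 1 := ⟨by norm_num, by norm_num⟩
      have hdef : (BT.node L R).slope = (L.slope + R.slope) / 2 +
          (Bp (1 / 2) L + Bp (1 / 2) R - 2 * Bp (1 / 2) L * Bp (1 / 2) R) := rfl
      rw [hdef, show Bp (1 / 2) (BT.node L R) = (Bp (1 / 2) L + Bp (1 / 2) R) / 2 from fp_half _ _]
      rw [firstPairs_node, List.mem_append] at hq
      rcases hq with hq | hq
      · have := slope_node_le (M := m + 1) (dL := L.slope) (dR := R.slope) (c := (1 / 2) ^ (m + 1))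
          (Bp_mem_Icc hmid htL.forall_mem_Icc) (Bp_mem_Icc hmid htR.forall_mem_Icc)
          (by have h := slope_le_of_exists_eq htL ⟨q, hq, hxy⟩; linarith)
          (by have h := slope_le htR.forall_mem_Icc; push_cast at h; linarith)
        push_cast
        rw [pow_succ]
        linarith
      · have := slope_node_le (M := m + 1) (dL := R.slope) (dR := L.slope) (c := (1 / 2) ^ (m + 1))
          (Bp_mem_Icc hmid htR.forall_mem_Icc) (Bp_mem_Icc hmid htL.forall_mem_Icc)
          (by have h := slope_le_of_exists_eq htR ⟨q, hq, hxy⟩; linarith)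
          (by have h := slope_le htL.forall_mem_Icc; push_cast at h; linarith)
        rw [add_comm R.slope, add_comm (Bp (1 / 2) R), mul_right_comm 2 (Bp (1 / 2) R)] at this
        push_cast
        rw [pow_succ]
        linarith

namespace BT

theorem isMixed_pair {a b : ℝ} :
    (BT.node (.leaf a) (.leaf b)).IsMixed ↔ (a = 0 ∧ b = 1) ∨ (a = 1 ∧ b = 0) := by
  simp [IsMixed, firstPairs, pairList, BT.leaves]

theorem IsMixed.node {m : ℕ} {L R : BT ℝ (m + 1)} :
    (BT.node L R).IsMixed ↔ L.IsMixed ∧ R.IsMixed := by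
  simp only [IsMixed, firstPairs_node, List.forall_mem_append]

theorem IsMixed.zeroOne : ∀ {m : ℕ} {t : BT ℝ (m + 1)}, t.IsMixed → ZeroOne t
  | 0, .node (.leaf a) (.leaf b), h => by
      rcases isMixed_pair.1 h with ⟨rfl, rfl⟩ | ⟨rfl, rfl⟩ <;>
        simp [ZeroOne, BT.leaves]
  | _ + 1, .node _ _, h => fun x hx =>
      (List.mem_append.1 hx).elim ((IsMixed.node.1 h).1.zeroOne x) ((IsMixed.node.1 h).2.zeroOne x)

theorem IsMixed.Bp_half : ∀ {m : ℕ} {t : BT ℝ (m + 1)}, t.IsMixed → Bp (1 / 2) t = 1 / 2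
  | 0, .node (.leaf a) (.leaf b), h => by
      rcases isMixed_pair.1 h with ⟨rfl, rfl⟩ | ⟨rfl, rfl⟩ <;>
        norm_num [Bp, fp_half]
  | _ + 1, .node _ _, h => by
      rw [Bp, fp_half, (IsMixed.node.1 h).1.Bp_half, (IsMixed.node.1 h).2.Bp_half]
      norm_num

theorem IsMixed.slope_eq : ∀ {m : ℕ} {t : BT ℝ (m + 1)}, t.IsMixed → t.slope = (m + 2) / 2
  | 0, .node (.leaf a) (.leaf b), h => by
      rcases isMixed_pair.1 h with ⟨rfl, rfl⟩ | ⟨rfl, rfl⟩ <;>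
        norm_num [slope, Bp]
  | _ + 1, .node _ _, h => by
      obtain ⟨hL, hR⟩ := IsMixed.node.1 h
      rw [slope, hL.slope_eq, hR.slope_eq, hL.Bp_half, hR.Bp_half]
      push_cast
      ring

theorem IsMixed.Bp_eq (p : ℝ) :
    ∀ {m : ℕ} {t t' : BT ℝ (m + 1)}, t.IsMixed → t'.IsMixed → Bp p t = Bp p t'
  | 0, .node (.leaf a) (.leaf b), .node (.leaf a') (.leaf b'), h, h' => by
      rcases isMixed_pair.1 h with ⟨rfl, rfl⟩ | ⟨rfl, rfl⟩ <;>
      rcases isMixed_pair.1 h' with ⟨rfl, rfl⟩ | ⟨rfl, rfl⟩ <;>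
        simp [Bp, fp]
  | _ + 1, .node _ _, .node _ _, h, h' => by
      rw [Bp, Bp, (IsMixed.node.1 h).1.Bp_eq p (IsMixed.node.1 h').1,
        (IsMixed.node.1 h).2.Bp_eq p (IsMixed.node.1 h').2]

theorem isMixed_mixed : ∀ m : ℕ, (mixed m).IsMixed
  | 0 => isMixed_pair.2 (.inr ⟨rfl, rfl⟩)
  | m + 1 => IsMixed.node.2 ⟨isMixed_mixed m, isMixed_mixed m⟩

end BT

/-- The first-order terms differ by at least `δ / 2 ^ (m + 1)`; the remainders are at most
`(m + 1)² δ²` each. -/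
theorem Bp_lt_of_exists_eq {m : ℕ} {t t' : BT ℝ (m + 1)} (ht : ZeroOne t)
    (hq : ∃ q ∈ firstPairs t, q.1 = q.2) (hmean : Bp (1 / 2) t = 1 / 2) (ht' : t'.IsMixed)
    {δ : ℝ} (hδ0 : 0 < δ) (hδ : 2 ^ (m + 2) * (m + 1) ^ 2 * δ < 1) :
    Bp (1 / 2 + δ) t < Bp (1 / 2 + δ) t' := by
  have hK : (4 : ℝ) ≤ 2 ^ (m + 2) * (m + 1) ^ 2 := by
    have h4 : (4 : ℝ) ≤ 2 ^ (m + 2) := by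
      rw [pow_add]; norm_num; exact one_le_pow₀ (by norm_num)
    nlinarith [sq_nonneg (m : ℝ), (m.cast_nonneg : (0 : ℝ) ≤ m)]
  have hδ' : δ ∈ Icc 0 (1 / 2) := ⟨hδ0.le, by nlinarith⟩
  have h1 := (abs_le.1 (abs_Bp_sub_linear_le hδ' ht.forall_mem_Icc)).2
  have h2 := slope_le_of_exists_eq ht hq
  have h3 := (abs_le.1 (abs_Bp_sub_linear_le hδ' ht'.zeroOne.forall_mem_Icc)).1
  rw [hmean] at h1 h2
  rw [ht'.Bp_half, ht'.slope_eq] at h3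
  have hc : (1 / 2 : ℝ) ^ (m + 1) * 2 ^ (m + 2) = 2 := by
    rw [pow_succ (2 : ℝ) (m + 1), ← mul_assoc, ← mul_pow]; norm_num
  have hgap : 2 * ((m + 1 : ℕ) : ℝ) ^ 2 * δ ^ 2 < δ * (1 / 2) ^ (m + 1) := by
    have := mul_lt_mul_of_pos_left hδ
      (mul_pos hδ0 (pow_pos (by norm_num : (0 : ℝ) < 1 / 2) (m + 1)))
    have e : δ * (1 / 2) ^ (m + 1) * (2 ^ (m + 2) * ((m : ℝ) + 1) ^ 2 * δ) =
        2 * ((m : ℝ) + 1) ^ 2 * δ ^ 2 := by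
      linear_combination (((m : ℝ) + 1) ^ 2 * δ ^ 2) * hc
    push_cast
    linarith
  norm_num at h2
  nlinarith [mul_le_mul_of_nonneg_left h2 hδ0.le]

end Bp

theorem Fin.card_filter_le_val_lt {N a b : ℕ} (hb : b ≤ N) :
    (Finset.univ.filter fun i : Fin N => a ≤ (i : ℕ) ∧ (i : ℕ) < b).card = b - a := by
  rw [← Finset.card_map Fin.valEmbedding, Finset.map_filter', Fin.map_valEmbedding_univ,
    ← Nat.card_Ico]
  congr 1
  ext x
  simp only [Finset.mem_filter, Finset.mem_Iio, Fin.exists_iff, Fin.valEmbedding_apply,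
    Finset.mem_Ico]
  constructor
  · rintro ⟨_, y, _, h, rfl⟩; exact h
  · rintro h; exact ⟨by omega, x, by omega, h, rfl⟩

namespace SMB

def player1 (n : ℕ) : Fin (2 ^ (n + 1)) := ⟨0, by positivity⟩

section

variable {n : ℕ} {ε : ℝ} {P : Fin (2 ^ (n + 1)) → Fin (2 ^ (n + 1)) → ℝ}

@[simp] theorem val_player1 : (player1 n : ℕ) = 0 := rfl

@[simp] theorem mem_smalls {i : Fin (2 ^ (n + 1))} :
    i ∈ smalls n ↔ 1 ≤ (i : ℕ) ∧ (i : ℕ) < 2 ^ n := by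
  simp [smalls]

@[simp] theorem mem_mediums {i : Fin (2 ^ (n + 1))} :
    i ∈ mediums n ↔ 2 ^ n ≤ (i : ℕ) ∧ (i : ℕ) < 2 ^ n + 2 ^ (n - 1) := by
  simp [mediums]

@[simp] theorem mem_bigs {i : Fin (2 ^ (n + 1))} :
    i ∈ bigs n ↔ 2 ^ n + 2 ^ (n - 1) ≤ (i : ℕ) := by
  simp [bigs]

theorem eq_player1_or_mem (i : Fin (2 ^ (n + 1))) :
    i = player1 n ∨ i ∈ smalls n ∨ i ∈ mediums n ∨ i ∈ bigs n := by
  rw [Fin.ext_iff, val_player1, mem_smalls, mem_mediums, mem_bigs]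
  omega

theorem notMem_bigs_of_mem_mediums {i : Fin (2 ^ (n + 1))} (h : i ∈ mediums n) :
    i ∉ bigs n := by
  simp only [mem_mediums, mem_bigs] at h ⊢; omega

theorem notMem_smalls {i : Fin (2 ^ (n + 1))} (h : i ∈ mediums n ∨ i ∈ bigs n) :
    i ∉ smalls n := by
  have := Nat.one_le_two_pow (n := n - 1)
  simp only [mem_smalls, mem_mediums, mem_bigs] at h ⊢; omega

theorem card_smalls : (smalls n).card = 2 ^ n - 1 :=
  Fin.card_filter_le_val_lt (Nat.pow_le_pow_right two_pos n.le_succ)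

theorem card_insert_player1_smalls : (insert (player1 n) (smalls n)).card = 2 ^ n := by
  rw [Finset.card_insert_of_notMem (by simp), card_smalls]
  have := Nat.one_le_two_pow (n := n)
  omega

theorem card_mediums (k : ℕ) : (mediums (k + 1)).card = 2 ^ k := by
  rw [mediums, Fin.card_filter_le_val_lt] <;> simp [pow_succ]; omega

theorem card_bigs (k : ℕ) : (bigs (k + 1)).card = 2 ^ k := by
  have : bigs (k + 1) = Finset.univ.filter fun i : Fin (2 ^ (k + 1 + 1)) =>
      2 ^ (k + 1) + 2 ^ k ≤ (i : ℕ) ∧ (i : ℕ) < 2 ^ (k + 1 + 1) := by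
    ext i; simp
  rw [this, Fin.card_filter_le_val_lt le_rfl]
  simp [pow_succ]
  omega

theorem univ_val_eq :
    (Finset.univ : Finset (Fin (2 ^ (n + 1)))).val =
      (insert (player1 n) (smalls n)).val + ((mediums n).val + (bigs n).val) := by
  refine (Multiset.Nodup.ext Finset.univ.nodup ?_).2 fun i => ?_
  · simp only [Multiset.nodup_add, Finset.nodup, true_and, Multiset.disjoint_left, Finset.mem_val,
      Finset.mem_insert, mem_smalls, mem_mediums, mem_bigs, Multiset.mem_add, Fin.ext_iff,
      val_player1]
    have := Nat.one_le_two_pow (n := n)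
    have := Nat.one_le_two_pow (n := n - 1)
    constructor <;> intro i hi hi' <;> omega
  · simp only [Finset.mem_val, Finset.mem_univ, Multiset.mem_add, Finset.mem_insert, true_iff]
    rcases eq_player1_or_mem i with h | h | h | h <;> simp [h]

theorem player1_beats_small (hP : SMBMatrix n ε P) {s : Fin (2 ^ (n + 1))} (hs : s ∈ smalls n) :
    P (player1 n) s = 1 :=
  hP.2.1 s hs

theorem P_player1_medium (hP : SMBMatrix n ε P) {m : Fin (2 ^ (n + 1))} (hm : m ∈ mediums n) :
    P (player1 n) m = 0.4 :=
  hP.2.2.1 m hm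

theorem P_player1_big (hP : SMBMatrix n ε P) {b : Fin (2 ^ (n + 1))} (hb : b ∈ bigs n) :
    P (player1 n) b = 0.6 :=
  hP.2.2.2.1 b hb

theorem small_loses (hP : SMBMatrix n ε P) {s j : Fin (2 ^ (n + 1))} (hs : s ∈ smalls n)
    (hj : j ∉ smalls n) : P s j = 0 := by
  rcases eq_player1_or_mem j with rfl | h | h | h
  · have hne : player1 n ≠ s := fun h => by simp [← h] at hs
    have := (hP.1 _ _ hne).2.2
    rw [player1_beats_small hP hs] at this
    linarith
  · exact absurd h hj
  · exact hP.2.2.2.2.1 s hs j h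
  · exact hP.2.2.2.2.2.1 s hs j h

theorem big_beats_medium (hP : SMBMatrix n ε P) {b m : Fin (2 ^ (n + 1))} (hb : b ∈ bigs n)
    (hm : m ∈ mediums n) : P b m = 1 / 2 + ε / 2 := by
  have := (hP.1 m b fun h => notMem_bigs_of_mem_mediums hm (h ▸ hb)).2.2
  rw [hP.2.2.2.2.2.2 m hm b hb] at this
  linarith

def bigIndicator (n : ℕ) (j : Fin (2 ^ (n + 1))) : ℝ := if j ∈ bigs n then 1 else 0

/-- The smalls cannot come through a field that contains a medium or big player. -/
theorem beatProb_player1 (hP : SMBMatrix n ε P) {m : ℕ} {t : BT (Fin (2 ^ (n + 1))) m}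
    (ht : t.leaves.Nodup) (h1 : player1 n ∉ t.leaves) (hex : ∃ j ∈ t.leaves, j ∉ smalls n) :
    beatProb P t (player1 n) = 0.4 + 0.2 * ∑ i ∈ bigs n, wd P t i := by
  have hpt : ∀ j, wd P t j * P (player1 n) j =
      0.4 * wd P t j + 0.2 * (if j ∈ bigs n then wd P t j else 0) := by
    intro j
    rcases eq_player1_or_mem j with rfl | h | h | h
    · simp [wd_eq_zero_of_notMem P h1]
    · simp [wd_eq_zero_of_dominated (fun s hs j hj => small_loses hP hs hj) t hex j h]
    · rw [P_player1_medium hP h, if_neg (notMem_bigs_of_mem_mediums h)]; ring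
    · rw [P_player1_big hP h, if_pos h]; ring
  rw [beatProb, Finset.sum_congr rfl fun j _ => hpt j, Finset.sum_add_distrib, ← Finset.mul_sum,
    ← Finset.mul_sum, sum_wd_eq_one hP.1 t ht, Finset.sum_ite_mem, Finset.univ_inter, mul_one]

theorem wd_player1_le (hP : SMBMatrix n ε P) :
    ∀ {m : ℕ} (t : BT (Fin (2 ^ (n + 1))) m), t.leaves.Nodup →
      (∃ j ∈ t.leaves, j ∉ insert (player1 n) (smalls n)) → wd P t (player1 n) ≤ 0.6
  | _, .leaf a, _, ⟨j, hj, hjS⟩ => by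
      simp only [BT.leaves, List.mem_singleton] at hj
      subst hj
      simp only [wd]
      split_ifs with h
      · exact absurd (h ▸ Finset.mem_insert_self _ _) hjS
      · norm_num
  | _, .node L R, hnd, ⟨j, hj, hjS⟩ => by
      obtain ⟨hL, hR, hLR⟩ := nodup_leaves_node.1 hnd
      have hj1 : j ∉ smalls n := fun h => hjS (Finset.mem_insert_of_mem h)
      have key : ∀ {k : ℕ} (A B : BT (Fin (2 ^ (n + 1))) k), A.leaves.Nodup →
          B.leaves.Nodup →
          player1 n ∉ B.leaves → (j ∈ A.leaves → wd P A (player1 n) ≤ 0.6) →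
          j ∈ A.leaves ∨ j ∈ B.leaves → wd P (.node A B) (player1 n) ≤ 0.6 := by
        intro _ A B hA hB h1B ihA hjAB
        rw [wd_node_of_notMem_right h1B]
        have hw0 := wd_nonneg hP.1 A hA (player1 n)
        have hw1 := wd_le_one hP.1 hA (player1 n)
        have hb0 := beatProb_nonneg hP.1 (wd_nonneg hP.1 B hB) h1B
        have hb1 := beatProb_le_one hP.1 hB h1B
        rcases hjAB with hjA | hjB
        · nlinarith [ihA hjA]
        · have := beatProb_player1 hP hB h1B ⟨j, hjB, hj1⟩
          have := sum_wd_le_one hP.1 hB (bigs n)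
          nlinarith
      by_cases h1L : player1 n ∈ L.leaves
      · exact key L R hL hR (hLR _ h1L) (fun h => wd_player1_le hP L hL ⟨j, h, hjS⟩)
          (List.mem_append.1 hj)
      · rw [wd_node_comm]
        exact key R L hR hL h1L (fun h => wd_player1_le hP R hR ⟨j, h, hjS⟩)
          (List.mem_append.1 hj).symm

theorem sum_bigs_wd_eq_Bp (hP : SMBMatrix n ε P) :
    ∀ {m : ℕ} (t : BT (Fin (2 ^ (n + 1))) m), t.leaves.Nodup →
      (∀ j ∈ t.leaves, j ∈ mediums n ∨ j ∈ bigs n) →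
      ∑ i ∈ bigs n, wd P t i = Bp (1 / 2 + ε / 2) (t.map (bigIndicator n))
  | _, .leaf a, _, _ => by simp [wd, Bp, BT.map, bigIndicator]
  | _, .node L R, hnd, hMB => by
      obtain ⟨hL, hR, hLR⟩ := nodup_leaves_node.1 hnd
      have hMBL : ∀ j ∈ L.leaves, j ∈ mediums n ∨ j ∈ bigs n :=
        fun j hj => hMB j (List.mem_append_left _ hj)
      have hMBR : ∀ j ∈ R.leaves, j ∈ mediums n ∨ j ∈ bigs n :=
        fun j hj => hMB j (List.mem_append_right _ hj)
      have hcompl : ∀ {k : ℕ} (A : BT (Fin (2 ^ (n + 1))) k), A.leaves.Nodup →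
          ∑ j ∈ (bigs n)ᶜ, wd P A j = 1 - ∑ j ∈ bigs n, wd P A j := by
        intro _ A hA
        rw [← sum_wd_eq_one hP.1 A hA, ← Finset.sum_add_sum_compl (bigs n)]
        ring
      -- across the big/non-big cut, only big-versus-medium matches have positive probability
      have hcross : ∀ i ∈ bigs n, ∀ j ∈ (bigs n)ᶜ,
          (wd P L i * wd P R j + wd P R i * wd P L j) * P i j =
            (1 / 2 + ε / 2) * (wd P L i * wd P R j + wd P R i * wd P L j) := by
        intro i hi j hj
        by_cases hjm : j ∈ mediums n
        · rw [big_beats_medium hP hi hjm, mul_comm]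
        · have hjL : j ∉ L.leaves := fun h => (hMBL j h).elim hjm (Finset.mem_compl.1 hj)
          have hjR : j ∉ R.leaves := fun h => (hMBR j h).elim hjm (Finset.mem_compl.1 hj)
          simp [wd_eq_zero_of_notMem P hjL, wd_eq_zero_of_notMem P hjR]
      rw [sum_wd_node hP.1 hLR, Finset.sum_congr rfl fun i hi => Finset.sum_congr rfl (hcross i hi)]
      simp only [← Finset.mul_sum, Finset.sum_add_distrib, ← Finset.sum_mul, hcompl L hL,
        hcompl R hR,
        sum_bigs_wd_eq_Bp hP L hL hMBL, sum_bigs_wd_eq_Bp hP R hR hMBR, BT.map, Bp, fp]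
      ring

theorem coe_leaves_right {L R : BT (Fin (2 ^ (n + 1))) n} (hσ : IsDraw (.node L R))
    (hL : (L.leaves : Multiset _) = (insert (player1 n) (smalls n)).val) :
    (R.leaves : Multiset _) = (mediums n).val + (bigs n).val := by
  have := isDraw_iff.1 hσ
  rw [univ_val_eq, BT.leaves, ← Multiset.coe_add, hL] at this
  exact add_left_cancel this

theorem mem_mediums_or_bigs {m : ℕ} {R : BT (Fin (2 ^ (n + 1))) m}
    (hR : (R.leaves : Multiset _) = (mediums n).val + (bigs n).val) :
    ∀ j ∈ R.leaves, j ∈ mediums n ∨ j ∈ bigs n := fun j hj => by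
  simpa [hR] using (Multiset.mem_coe.2 hj)

theorem wd_node_of_left_eq (hP : SMBMatrix n ε P) {L R : BT (Fin (2 ^ (n + 1))) n}
    (hσ : IsDraw (.node L R))
    (hL : (L.leaves : Multiset _) = (insert (player1 n) (smalls n)).val) :
    wd P (.node L R) (player1 n) = 0.4 + 0.2 * Bp (1 / 2 + ε / 2) (R.map (bigIndicator n)) := by
  obtain ⟨hLn, hRn, hLR⟩ := nodup_leaves_node.1 hσ.nodup
  have hmemL : ∀ j, j ∈ L.leaves ↔ j ∈ insert (player1 n) (smalls n) := fun j => by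
    rw [← Multiset.mem_coe, hL, Finset.mem_val]
  have h1L : player1 n ∈ L.leaves := (hmemL _).2 (Finset.mem_insert_self _ _)
  have hMB := mem_mediums_or_bigs (coe_leaves_right hσ hL)
  obtain ⟨j, hj⟩ :=
    List.exists_mem_of_length_pos (by simp [BT.length_leaves] : 0 < R.leaves.length)
  have hwin : wd P L (player1 n) = 1 := by
    refine wd_eq_one_of_forall_beats hP.1 L hLn h1L fun s hs hs1 => player1_beats_small hP ?_
    simpa [hs1] using (hmemL s).1 hs
  rw [wd_node_of_notMem_right (hLR _ h1L), hwin, one_mul,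
    beatProb_player1 hP hRn (hLR _ h1L) ⟨j, hj, notMem_smalls (hMB j hj)⟩,
    sum_bigs_wd_eq_Bp hP R hRn hMB]

theorem wd_node_le_of_left_ne (hP : SMBMatrix n ε P) {L R : BT (Fin (2 ^ (n + 1))) n}
    (hσ : IsDraw (.node L R)) (h1L : player1 n ∈ L.leaves)
    (hL : (L.leaves : Multiset _) ≠ (insert (player1 n) (smalls n)).val) :
    wd P (.node L R) (player1 n) ≤ 0.36 := by
  obtain ⟨hLn, hRn, hLR⟩ := nodup_leaves_node.1 hσ.nodup
  have hexL : ∃ j ∈ L.leaves, j ∉ insert (player1 n) (smalls n) := by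
    by_contra! h
    exact hL (BT.coe_leaves_eq_of_subset hLn h card_insert_player1_smalls.le)
  have hexR : ∃ j ∈ R.leaves, j ∉ smalls n := by
    by_contra! h
    have := BT.two_pow_le_card_of_subset hRn h
    rw [card_smalls] at this
    have := Nat.one_le_two_pow (n := n)
    omega
  rw [wd_node_of_notMem_right (hLR _ h1L)]
  have hw0 := wd_nonneg hP.1 L hLn (player1 n)
  have hw1 := wd_player1_le hP L hLn hexL
  have hb := beatProb_player1 hP hRn (hLR _ h1L) hexR
  have hB0 : 0 ≤ ∑ i ∈ bigs n, wd P R i := Finset.sum_nonneg fun i _ => wd_nonneg hP.1 R hRn i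
  have hB1 := sum_wd_le_one hP.1 hRn (bigs n)
  nlinarith

theorem isMixed_map_of_mbPaired {m : ℕ} {R : BT (Fin (2 ^ (n + 1))) m} (h : MBPaired n R) :
    (R.map (bigIndicator n)).IsMixed := by
  intro q hq
  rw [firstPairs_map, List.mem_map] at hq
  obtain ⟨q, hq', rfl⟩ := hq
  rcases h q hq' with ⟨hm, hb⟩ | ⟨hb, hm⟩
  · simp [bigIndicator, hb, notMem_bigs_of_mem_mediums hm]
  · simp [bigIndicator, hb, notMem_bigs_of_mem_mediums hm]

theorem exists_eq_of_not_mbPaired {m : ℕ} {R : BT (Fin (2 ^ (n + 1))) m}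
    (hMB : ∀ j ∈ R.leaves, j ∈ mediums n ∨ j ∈ bigs n) (h : ¬MBPaired n R) :
    ∃ q ∈ firstPairs (R.map (bigIndicator n)), q.1 = q.2 := by
  simp only [MBPaired, not_forall] at h
  obtain ⟨q, hq, hq'⟩ := h
  refine ⟨Prod.map _ _ q, by rw [firstPairs_map]; exact List.mem_map_of_mem hq, ?_⟩
  obtain ⟨h1, h2⟩ := mem_of_mem_pairList hq
  rcases hMB _ h1 with h1 | h1 <;> rcases hMB _ h2 with h2 | h2
  · simp [bigIndicator, notMem_bigs_of_mem_mediums h1, notMem_bigs_of_mem_mediums h2]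
  · exact absurd (Or.inl ⟨h1, h2⟩) hq'
  · exact absurd (Or.inr ⟨h1, h2⟩) hq'
  · simp [bigIndicator, h1, h2]

theorem zeroOne_map_bigIndicator {m : ℕ} (R : BT (Fin (2 ^ (n + 1))) m) :
    ZeroOne (R.map (bigIndicator n)) := by
  intro x hx
  rw [BT.leaves_map, List.mem_map] at hx
  obtain ⟨j, -, rfl⟩ := hx
  unfold bigIndicator
  split_ifs <;> simp

theorem Bp_half_map_bigIndicator {k : ℕ} {R : BT (Fin (2 ^ (k + 1 + 1))) (k + 1)}
    (hR : (R.leaves : Multiset _) = (mediums (k + 1)).val + (bigs (k + 1)).val) :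
    Bp (1 / 2) (R.map (bigIndicator (k + 1))) = 1 / 2 := by
  have hsum : (R.leaves.map (bigIndicator (k + 1))).sum = 2 ^ k := by
    rw [← Multiset.sum_coe, ← Multiset.map_coe, hR, Multiset.map_add, Multiset.sum_add,
      ← Finset.sum_eq_multiset_sum, ← Finset.sum_eq_multiset_sum]
    simp only [bigIndicator]
    rw [Finset.sum_eq_zero fun j hj => if_neg (notMem_bigs_of_mem_mediums hj),
      Finset.sum_ite_of_true fun j hj => hj]
    simp [card_bigs]
  rw [Bp_half_eq, BT.leaves_map, hsum, pow_succ]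
  field_simp

end

section

variable {k : ℕ} {ε : ℝ} {P : Fin (2 ^ (k + 1 + 1)) → Fin (2 ^ (k + 1 + 1)) → ℝ}

theorem wd_eq_of_optShape (hP : SMBMatrix (k + 1) ε P)
    {σ : BT (Fin (2 ^ (k + 1 + 1))) (k + 1 + 1)} (hσ : IsDraw σ) (hs : OptShape (k + 1) σ) :
    wd P σ (player1 (k + 1)) = 0.4 + 0.2 * Bp (1 / 2 + ε / 2) (BT.mixed k) := by
  obtain ⟨L, R, rfl, ⟨hL, hR⟩ | ⟨hR, hL⟩⟩ := hs
  · rw [wd_node_of_left_eq hP hσ hL, (isMixed_map_of_mbPaired hR).Bp_eq _ (BT.isMixed_mixed k)]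
  · rw [wd_node_comm, wd_node_of_left_eq hP hσ.swap hR,
      (isMixed_map_of_mbPaired hL).Bp_eq _ (BT.isMixed_mixed k)]

theorem wd_node_lt (hP : SMBMatrix (k + 1) ε P) (hε0 : 0 < ε)
    (hε : 2 ^ (k + 1) * (k + 1) ^ 2 * ε < 1) {L R : BT (Fin (2 ^ (k + 1 + 1))) (k + 1)}
    (hσ : IsDraw (.node L R)) (h1L : player1 (k + 1) ∈ L.leaves)
    (hs : ¬((L.leaves : Multiset _) = (insert (player1 (k + 1)) (smalls (k + 1))).val ∧
      MBPaired (k + 1) R)) :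
    wd P (.node L R) (player1 (k + 1)) < 0.4 + 0.2 * Bp (1 / 2 + ε / 2) (BT.mixed k) := by
  by_cases hL : (L.leaves : Multiset _) = (insert (player1 (k + 1)) (smalls (k + 1))).val
  · have hR := coe_leaves_right hσ hL
    have hlt := Bp_lt_of_exists_eq (zeroOne_map_bigIndicator R)
      (exists_eq_of_not_mbPaired (mem_mediums_or_bigs hR) fun h => hs ⟨hL, h⟩)
      (Bp_half_map_bigIndicator hR) (BT.isMixed_mixed k) (half_pos hε0)
      (by linear_combination hε)
    rw [wd_node_of_left_eq hP hσ hL]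
    linarith
  · have hK : (1 : ℝ) ≤ 2 ^ (k + 1) * (k + 1) ^ 2 :=
      one_le_mul_of_one_le_of_one_le (one_le_pow₀ one_le_two) (one_le_pow₀ (by simp))
    have hp : 1 / 2 + ε / 2 ∈ Set.Icc (0 : ℝ) 1 := ⟨by linarith, by nlinarith⟩
    have := (Bp_mem_Icc hp (BT.isMixed_mixed k).zeroOne.forall_mem_Icc).1
    have := wd_node_le_of_left_ne hP hσ h1L hL
    linarith

theorem wd_lt_of_not_optShape (hP : SMBMatrix (k + 1) ε P) (hε0 : 0 < ε)
    (hε : 2 ^ (k + 1) * (k + 1) ^ 2 * ε < 1) {σ : BT (Fin (2 ^ (k + 1 + 1))) (k + 1 + 1)}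
    (hσ : IsDraw σ) (hs : ¬OptShape (k + 1) σ) :
    wd P σ (player1 (k + 1)) < 0.4 + 0.2 * Bp (1 / 2 + ε / 2) (BT.mixed k) := by
  cases σ with | node L R => ?_
  rcases List.mem_append.1 (hσ.mem (player1 (k + 1))) with h1 | h1
  · exact wd_node_lt hP hε0 hε hσ h1 fun h => hs ⟨L, R, rfl, .inl h⟩
  · rw [wd_node_comm]
    exact wd_node_lt hP hε0 hε hσ.swap h1 fun h => hs ⟨L, R, rfl, .inr h⟩

theorem exists_optShape (k : ℕ) :
    ∃ τ : BT (Fin (2 ^ (k + 1 + 1))) (k + 1 + 1), IsDraw τ ∧ OptShape (k + 1) τ := by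
  obtain ⟨L, hL⟩ :=
    BT.exists_leaves_eq (k + 1) (insert (player1 (k + 1)) (smalls (k + 1))).toList
    (by rw [Finset.length_toList, card_insert_player1_smalls])
  have hlen : (mediums (k + 1)).toList.length = (bigs (k + 1)).toList.length := by
    simp [card_mediums, card_bigs]
  have hperm := List.flatMap_zip_perm hlen
  obtain ⟨R, hR⟩ := BT.exists_leaves_eq (k + 1)
    (((mediums (k + 1)).toList.zip (bigs (k + 1)).toList).flatMap fun q => [q.1, q.2])
    (by simp [hperm.length_eq, card_mediums, card_bigs, pow_succ, mul_two])
  have hLm : (L.leaves : Multiset _) = (insert (player1 (k + 1)) (smalls (k + 1))).val := by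
    rw [hL, Finset.coe_toList]
  refine ⟨.node L R, isDraw_iff.2 ?_, L, R, rfl, .inl ⟨hLm, fun q hq => .inl ?_⟩⟩
  · rw [univ_val_eq, BT.leaves, ← Multiset.coe_add, hLm, hR, Multiset.coe_eq_coe.2 hperm,
      ← Multiset.coe_add, Finset.coe_toList, Finset.coe_toList]
  · rw [firstPairs, hR, pairList_flatMap] at hq
    exact ⟨Finset.mem_toList.1 (List.of_mem_zip hq).1,
      Finset.mem_toList.1 (List.of_mem_zip hq).2⟩

end

end SMB

/-- for `n ≥ 2` there is `ε₀ > 0` such that for all `ε ∈ (0, ε₀)` and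
every small/medium/big comparison matrix `P` with parameter `ε`, a draw maximizes
the winning probability of player 1 iff it has the shape `OptShape`. -/
theorem smb_optimal_draws (n : ℕ) (hn : 2 ≤ n) :
    ∃ ε₀ : ℝ, 0 < ε₀ ∧ ∀ ε ∈ Set.Ioo (0 : ℝ) ε₀,
      ∀ P : Fin (2 ^ (n + 1)) → Fin (2 ^ (n + 1)) → ℝ, SMBMatrix n ε P →
        ∀ σ : BT (Fin (2 ^ (n + 1))) (n + 1), IsDraw σ →
          ((∀ τ : BT (Fin (2 ^ (n + 1))) (n + 1), IsDraw τ →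
              wd P τ ⟨0, by positivity⟩ ≤ wd P σ ⟨0, by positivity⟩) ↔
            OptShape n σ) := by
  obtain ⟨k, rfl⟩ : ∃ k, n = k + 1 := ⟨n - 1, by omega⟩
  obtain ⟨τ₀, hτ₀, hτ₀s⟩ := SMB.exists_optShape k
  refine ⟨1 / (2 ^ (k + 1) * (k + 1) ^ 2), by positivity,
    fun ε ⟨hε0, hε⟩ P hP σ hσ => ?_⟩
  have hε' : 2 ^ (k + 1) * (k + 1) ^ 2 * ε < 1 := by
    rwa [lt_div_iff₀ (by positivity), mul_comm] at hε
  have hlt := fun τ hτ hτs => SMB.wd_lt_of_not_optShape (P := P) hP hε0 hε' (σ := τ) hτ hτs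
  refine ⟨fun hmax => ?_, fun hs τ hτ => ?_⟩
  · by_contra hs
    have : wd P τ₀ (SMB.player1 (k + 1)) ≤ wd P σ (SMB.player1 (k + 1)) := hmax τ₀ hτ₀
    rw [SMB.wd_eq_of_optShape hP hτ₀ hτ₀s] at this
    exact this.not_gt (hlt σ hσ hs)
  · change wd P τ (SMB.player1 (k + 1)) ≤ wd P σ (SMB.player1 (k + 1))
    rw [SMB.wd_eq_of_optShape hP hσ hs]
    by_cases hτs : OptShape (k + 1) τ
    · exact (SMB.wd_eq_of_optShape hP hτ hτs).le
    · exact (hlt τ hτ hτs).le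
end
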